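/- arXiv:2310.09637 — 5 statements merged into one kernel-verified Lean document; each statement's English description precedes it below -/
import Mathlib

section
/- Let n ≥ 1. The set of BMS vector fields on ℝ × ℝ^n is closed under the Lie bracket of vector fields: if X₁ = X_{T₁,ε₁} and X₂ = X_{T₂,ε₂} are BMS vector fields, then [X₁, X₂] is again a BMS vector field. In particular, the BMS vector fields form a Lie subalgebra of the smooth vector fields on ℝ^{n+1}. -/
/-- The Lie bracket of vector fields on a normed space, identified with smooth maps:
`[X,Y](p) = (DY)(p) X(p) − (DX)(p) Y(p)`. -/
noncomputable def vfBracket {E : Type*} [NormedAddCommGroup E] [NormedSpace ℝ E]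
    (X Y : E → E) : E → E :=
  fun p => fderiv ℝ Y p (X p) - fderiv ℝ X p (Y p)

/-- The divergence of a vector field on `ℝ^n`: `div ε = trace (Dε)`. -/
noncomputable def divg {n : ℕ} (ε : (Fin n → ℝ) → (Fin n → ℝ)) (y : Fin n → ℝ) : ℝ :=
  ∑ k, fderiv ℝ ε y (Pi.single k 1) k

/-- `ε` is a conformal Killing field of the flat Euclidean metric on `ℝ^n`:
it is smooth and `(Dε)(y) + (Dε)(y)ᵀ = (2/n)(div ε)(y)·Id` for all `y`. -/
def IsConfKilling (n : ℕ) (ε : (Fin n → ℝ) → (Fin n → ℝ)) : Prop :=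
  ContDiff ℝ (⊤ : ℕ∞) ε ∧ ∀ y i j,
    fderiv ℝ ε y (Pi.single j 1) i + fderiv ℝ ε y (Pi.single i 1) j
      = 2 / (n : ℝ) * divg ε y * (if i = j then 1 else 0)

/-- The BMS vector field `X_{T,ε}(u,y) = ((u/n)(div ε)(y) + T(y), ε(y))` on `ℝ × ℝ^n`. -/
noncomputable def bmsField (n : ℕ) (T : (Fin n → ℝ) → ℝ)
    (ε : (Fin n → ℝ) → (Fin n → ℝ)) : ℝ × (Fin n → ℝ) → ℝ × (Fin n → ℝ) :=
  fun p => (p.1 / (n : ℝ) * divg ε p.2 + T p.2, ε p.2)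

/-- `X` is a BMS vector field on `ℝ × ℝ^n`. -/
def IsBMS (n : ℕ) (X : ℝ × (Fin n → ℝ) → ℝ × (Fin n → ℝ)) : Prop :=
  ∃ T ε, ContDiff ℝ (⊤ : ℕ∞) T ∧ IsConfKilling n ε ∧ X = bmsField n T ε

section aux
variable {n : ℕ} {ε ε₁ ε₂ : (Fin n → ℝ) → (Fin n → ℝ)}

lemma smooth_fderiv (hε : ContDiff ℝ (⊤ : ℕ∞) ε) : ContDiff ℝ (⊤ : ℕ∞) (fderiv ℝ ε) :=
  hε.fderiv_right (by simp)

lemma contDiff_entry (hε : ContDiff ℝ (⊤ : ℕ∞) ε) (a : Fin n → ℝ) (b : Fin n) :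
    ContDiff ℝ (⊤ : ℕ∞) (fun x => fderiv ℝ ε x a b) :=
  (ContinuousLinearMap.proj (R := ℝ) (φ := fun _ : Fin n => ℝ) b).contDiff.comp
    ((smooth_fderiv hε).clm_apply contDiff_const)

lemma contDiff_divg (hε : ContDiff ℝ (⊤ : ℕ∞) ε) : ContDiff ℝ (⊤ : ℕ∞) (divg ε) :=
  ContDiff.sum fun k _ => contDiff_entry hε (Pi.single k 1) k

lemma fderiv_entry (hε : ContDiff ℝ (⊤ : ℕ∞) ε) (y v a : Fin n → ℝ) (b : Fin n) :
    fderiv ℝ (fun x => fderiv ℝ ε x a b) y v = fderiv ℝ (fderiv ℝ ε) y v a b := by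
  classical
  set L : ((Fin n → ℝ) →L[ℝ] (Fin n → ℝ)) →L[ℝ] ℝ :=
    (ContinuousLinearMap.proj b).comp (ContinuousLinearMap.apply ℝ (Fin n → ℝ) a)
  have hdiff : DifferentiableAt ℝ (fderiv ℝ ε) y :=
    ((smooth_fderiv hε).differentiable (by simp)) y
  have h := (L.hasFDerivAt.comp y hdiff.hasFDerivAt)
  have : (fun x => fderiv ℝ ε x a b) = L ∘ fderiv ℝ ε := rfl
  rw [this, h.fderiv]
  simp [L]

lemma fderiv_app_app (h₂ : ContDiff ℝ (⊤ : ℕ∞) ε₂) (h₁ : ContDiff ℝ (⊤ : ℕ∞) ε₁) (y v : Fin n → ℝ) :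
    fderiv ℝ (fun x => fderiv ℝ ε₂ x (ε₁ x)) y v
      = fderiv ℝ (fderiv ℝ ε₂) y v (ε₁ y) + fderiv ℝ ε₂ y (fderiv ℝ ε₁ y v) := by
  rw [fderiv_clm_apply (((smooth_fderiv h₂).differentiable (by simp)) y)
    ((h₁.differentiable (by simp)) y)]
  simp [add_comm]

lemma fderiv_divg_apply (hε : ContDiff ℝ (⊤ : ℕ∞) ε) (y v : Fin n → ℝ) :
    fderiv ℝ (divg ε) y v = ∑ k, fderiv ℝ (fderiv ℝ ε) y v (Pi.single k 1) k := by
  have : divg ε = fun x => ∑ k, fderiv ℝ ε x (Pi.single k 1) k := rfl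
  rw [this, fderiv_fun_sum fun k _ =>
    ((contDiff_entry hε (Pi.single k 1) k).differentiable (by simp)) y]
  rw [ContinuousLinearMap.sum_apply]
  exact Finset.sum_congr rfl fun k _ => fderiv_entry hε y v (Pi.single k 1) k

lemma snd_symm (hε : ContDiff ℝ (⊤ : ℕ∞) ε) (y v w : Fin n → ℝ) :
    fderiv ℝ (fderiv ℝ ε) y v w = fderiv ℝ (fderiv ℝ ε) y w v :=
  (hε.contDiffAt.isSymmSndFDerivAt (by simp only [minSmoothness_of_isRCLikeNormedField]; exact WithTop.coe_le_coe.mpr (le_top : (2 : ℕ∞) ≤ ⊤))) v w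

lemma clm_expand (A : (Fin n → ℝ) →L[ℝ] (Fin n → ℝ)) (v : Fin n → ℝ) (k : Fin n) :
    A v k = ∑ l, v l * A (Pi.single l 1) k := by
  have hv : v = ∑ l, v l • (Pi.single l 1 : Fin n → ℝ) := by
    funext j
    simp [Pi.single_apply, Finset.sum_apply, Finset.sum_ite_eq', eq_comm]
  conv_lhs => rw [hv]
  rw [map_sum]
  simp [Finset.sum_apply]

lemma ck_deriv (h : IsConfKilling n ε) (y w : Fin n → ℝ) (i j : Fin n) :
    fderiv ℝ (fderiv ℝ ε) y w (Pi.single j 1) i + fderiv ℝ (fderiv ℝ ε) y w (Pi.single i 1) j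
      = 2 / (n : ℝ) * fderiv ℝ (divg ε) y w * (if i = j then 1 else 0) := by
  obtain ⟨hε, hck⟩ := h
  have hfun : (fun x => fderiv ℝ ε x (Pi.single j 1) i + fderiv ℝ ε x (Pi.single i 1) j)
      = fun x => (2 / (n : ℝ) * (if i = j then (1:ℝ) else 0)) * divg ε x := by
    funext x; rw [hck x i j]; ring
  have h1 : fderiv ℝ (fun x => fderiv ℝ ε x (Pi.single j 1) i
        + fderiv ℝ ε x (Pi.single i 1) j) y w
      = fderiv ℝ (fderiv ℝ ε) y w (Pi.single j 1) i
        + fderiv ℝ (fderiv ℝ ε) y w (Pi.single i 1) j := by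
    rw [fderiv_fun_add (((contDiff_entry hε (Pi.single j 1) i).differentiable (by simp)) y)
      (((contDiff_entry hε (Pi.single i 1) j).differentiable (by simp)) y)]
    rw [ContinuousLinearMap.add_apply, fderiv_entry hε, fderiv_entry hε]
  have h2 : fderiv ℝ (fun x => (2 / (n : ℝ) * (if i = j then (1:ℝ) else 0)) * divg ε x) y w
      = (2 / (n : ℝ) * (if i = j then (1:ℝ) else 0)) * fderiv ℝ (divg ε) y w := by
    rw [fderiv_const_mul (((contDiff_divg hε).differentiable (by simp)) y)]
    split <;> simp
  rw [← h1, hfun, h2]; ring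

lemma divg_bracket (h₁ : ContDiff ℝ (⊤ : ℕ∞) ε₁) (h₂ : ContDiff ℝ (⊤ : ℕ∞) ε₂) (y : Fin n → ℝ) :
    divg (fun x => fderiv ℝ ε₂ x (ε₁ x) - fderiv ℝ ε₁ x (ε₂ x)) y
      = fderiv ℝ (divg ε₂) y (ε₁ y) - fderiv ℝ (divg ε₁) y (ε₂ y) := by
  have dif : ∀ (f g : (Fin n → ℝ) → (Fin n → ℝ)), ContDiff ℝ (⊤ : ℕ∞) f → ContDiff ℝ (⊤ : ℕ∞) g →
      ∀ x, DifferentiableAt ℝ (fun x => fderiv ℝ f x (g x)) x := fun f g hf hg x =>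
    (((smooth_fderiv hf).clm_apply hg).differentiable (by simp)) x
  have hsub : ∀ k : Fin n,
      fderiv ℝ (fun x => fderiv ℝ ε₂ x (ε₁ x) - fderiv ℝ ε₁ x (ε₂ x)) y (Pi.single k 1) k
        = (fderiv ℝ (fderiv ℝ ε₂) y (Pi.single k 1) (ε₁ y) k
            + fderiv ℝ ε₂ y (fderiv ℝ ε₁ y (Pi.single k 1)) k)
          - (fderiv ℝ (fderiv ℝ ε₁) y (Pi.single k 1) (ε₂ y) k
            + fderiv ℝ ε₁ y (fderiv ℝ ε₂ y (Pi.single k 1)) k) := by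
    intro k
    rw [fderiv_fun_sub (dif ε₂ ε₁ h₂ h₁ y) (dif ε₁ ε₂ h₁ h₂ y), ContinuousLinearMap.sub_apply,
      fderiv_app_app h₂ h₁, fderiv_app_app h₁ h₂]
    simp
  have lhs : divg (fun x => fderiv ℝ ε₂ x (ε₁ x) - fderiv ℝ ε₁ x (ε₂ x)) y
      = ∑ k, fderiv ℝ (fun x => fderiv ℝ ε₂ x (ε₁ x) - fderiv ℝ ε₁ x (ε₂ x)) y
          (Pi.single k 1) k := rfl
  rw [lhs, Finset.sum_congr rfl fun k _ => hsub k, Finset.sum_sub_distrib,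
    Finset.sum_add_distrib, Finset.sum_add_distrib,
    fderiv_divg_apply h₂ y (ε₁ y), fderiv_divg_apply h₁ y (ε₂ y)]
  have cross : ∑ k, fderiv ℝ ε₂ y (fderiv ℝ ε₁ y (Pi.single k 1)) k
      = ∑ k, fderiv ℝ ε₁ y (fderiv ℝ ε₂ y (Pi.single k 1)) k := by
    have e1 : ∀ k, fderiv ℝ ε₂ y (fderiv ℝ ε₁ y (Pi.single k 1)) k
        = ∑ l, fderiv ℝ ε₁ y (Pi.single k 1) l * fderiv ℝ ε₂ y (Pi.single l 1) k :=
      fun k => clm_expand _ _ _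
    have e2 : ∀ k, fderiv ℝ ε₁ y (fderiv ℝ ε₂ y (Pi.single k 1)) k
        = ∑ l, fderiv ℝ ε₂ y (Pi.single k 1) l * fderiv ℝ ε₁ y (Pi.single l 1) k :=
      fun k => clm_expand _ _ _
    simp only [e1, e2]
    rw [Finset.sum_comm]
    exact Finset.sum_congr rfl fun k _ => Finset.sum_congr rfl fun l _ => mul_comm _ _
  have s2 : ∑ k, fderiv ℝ (fderiv ℝ ε₂) y (Pi.single k 1) (ε₁ y) k
      = ∑ k, fderiv ℝ (fderiv ℝ ε₂) y (ε₁ y) (Pi.single k 1) k :=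
    Finset.sum_congr rfl fun k _ => by rw [snd_symm h₂]
  have s1 : ∑ k, fderiv ℝ (fderiv ℝ ε₁) y (Pi.single k 1) (ε₂ y) k
      = ∑ k, fderiv ℝ (fderiv ℝ ε₁) y (ε₂ y) (Pi.single k 1) k :=
    Finset.sum_congr rfl fun k _ => by rw [snd_symm h₁]
  rw [s1, s2, cross]; ring

lemma smooth_vfBracket (h₁ : ContDiff ℝ (⊤ : ℕ∞) ε₁) (h₂ : ContDiff ℝ (⊤ : ℕ∞) ε₂) :
    ContDiff ℝ (⊤ : ℕ∞) (vfBracket ε₁ ε₂) :=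
  ((smooth_fderiv h₂).clm_apply h₁).sub ((smooth_fderiv h₁).clm_apply h₂)

lemma fderiv_vfBracket (h₁ : ContDiff ℝ (⊤ : ℕ∞) ε₁) (h₂ : ContDiff ℝ (⊤ : ℕ∞) ε₂) (y v : Fin n → ℝ) :
    fderiv ℝ (vfBracket ε₁ ε₂) y v
      = fderiv ℝ (fderiv ℝ ε₂) y v (ε₁ y) + fderiv ℝ ε₂ y (fderiv ℝ ε₁ y v)
        - fderiv ℝ (fderiv ℝ ε₁) y v (ε₂ y) - fderiv ℝ ε₁ y (fderiv ℝ ε₂ y v) := by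
  have dif : ∀ (f g : (Fin n → ℝ) → (Fin n → ℝ)), ContDiff ℝ (⊤ : ℕ∞) f → ContDiff ℝ (⊤ : ℕ∞) g →
      DifferentiableAt ℝ (fun x => fderiv ℝ f x (g x)) y := fun f g hf hg =>
    (((smooth_fderiv hf).clm_apply hg).differentiable (by simp)) y
  have : vfBracket ε₁ ε₂ = fun x => fderiv ℝ ε₂ x (ε₁ x) - fderiv ℝ ε₁ x (ε₂ x) := rfl
  rw [this, fderiv_fun_sub (dif ε₂ ε₁ h₂ h₁) (dif ε₁ ε₂ h₁ h₂), ContinuousLinearMap.sub_apply,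
    fderiv_app_app h₂ h₁, fderiv_app_app h₁ h₂]
  abel

lemma divg_vfBracket (h₁ : ContDiff ℝ (⊤ : ℕ∞) ε₁) (h₂ : ContDiff ℝ (⊤ : ℕ∞) ε₂) (y : Fin n → ℝ) :
    divg (vfBracket ε₁ ε₂) y = fderiv ℝ (divg ε₂) y (ε₁ y) - fderiv ℝ (divg ε₁) y (ε₂ y) :=
  divg_bracket h₁ h₂ y

lemma ck_bracket (h₁ : IsConfKilling n ε₁) (h₂ : IsConfKilling n ε₂) :
    IsConfKilling n (vfBracket ε₁ ε₂) := by
  obtain ⟨hs₁, hck₁⟩ := h₁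
  obtain ⟨hs₂, hck₂⟩ := h₂
  refine ⟨smooth_vfBracket hs₁ hs₂, fun y i j => ?_⟩
  have hvj := fderiv_vfBracket hs₁ hs₂ y (Pi.single j 1)
  have hvi := fderiv_vfBracket hs₁ hs₂ y (Pi.single i 1)
  rw [hvj, hvi, divg_vfBracket hs₁ hs₂]
  simp only [Pi.add_apply, Pi.sub_apply]
  have e2j : fderiv ℝ (fderiv ℝ ε₂) y (Pi.single j 1) (ε₁ y) i
      = fderiv ℝ (fderiv ℝ ε₂) y (ε₁ y) (Pi.single j 1) i := by rw [snd_symm hs₂]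
  have e2i : fderiv ℝ (fderiv ℝ ε₂) y (Pi.single i 1) (ε₁ y) j
      = fderiv ℝ (fderiv ℝ ε₂) y (ε₁ y) (Pi.single i 1) j := by rw [snd_symm hs₂]
  have e1j : fderiv ℝ (fderiv ℝ ε₁) y (Pi.single j 1) (ε₂ y) i
      = fderiv ℝ (fderiv ℝ ε₁) y (ε₂ y) (Pi.single j 1) i := by rw [snd_symm hs₁]
  have e1i : fderiv ℝ (fderiv ℝ ε₁) y (Pi.single i 1) (ε₂ y) j
      = fderiv ℝ (fderiv ℝ ε₁) y (ε₂ y) (Pi.single i 1) j := by rw [snd_symm hs₁]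
  rw [e2j, e2i, e1j, e1i]
  have f2j : fderiv ℝ ε₂ y (fderiv ℝ ε₁ y (Pi.single j 1)) i
      = ∑ l, fderiv ℝ ε₁ y (Pi.single j 1) l * fderiv ℝ ε₂ y (Pi.single l 1) i :=
    clm_expand _ _ _
  have f2i : fderiv ℝ ε₂ y (fderiv ℝ ε₁ y (Pi.single i 1)) j
      = ∑ l, fderiv ℝ ε₁ y (Pi.single i 1) l * fderiv ℝ ε₂ y (Pi.single l 1) j :=
    clm_expand _ _ _
  have f1j : fderiv ℝ ε₁ y (fderiv ℝ ε₂ y (Pi.single j 1)) i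
      = ∑ l, fderiv ℝ ε₂ y (Pi.single j 1) l * fderiv ℝ ε₁ y (Pi.single l 1) i :=
    clm_expand _ _ _
  have f1i : fderiv ℝ ε₁ y (fderiv ℝ ε₂ y (Pi.single i 1)) j
      = ∑ l, fderiv ℝ ε₂ y (Pi.single i 1) l * fderiv ℝ ε₁ y (Pi.single l 1) j :=
    clm_expand _ _ _
  rw [f2j, f2i, f1j, f1i]
  have h2ord₂ := ck_deriv ⟨hs₂, hck₂⟩ y (ε₁ y) i j
  have h2ord₁ := ck_deriv ⟨hs₁, hck₁⟩ y (ε₂ y) i j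
  have keysum : ∑ l, (fderiv ℝ ε₁ y (Pi.single j 1) l * fderiv ℝ ε₂ y (Pi.single l 1) i
        + fderiv ℝ ε₁ y (Pi.single i 1) l * fderiv ℝ ε₂ y (Pi.single l 1) j
        - fderiv ℝ ε₂ y (Pi.single j 1) l * fderiv ℝ ε₁ y (Pi.single l 1) i
        - fderiv ℝ ε₂ y (Pi.single i 1) l * fderiv ℝ ε₁ y (Pi.single l 1) j) = 0 := by
    have hterm : ∀ l, fderiv ℝ ε₁ y (Pi.single j 1) l * fderiv ℝ ε₂ y (Pi.single l 1) i
        + fderiv ℝ ε₁ y (Pi.single i 1) l * fderiv ℝ ε₂ y (Pi.single l 1) j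
        - fderiv ℝ ε₂ y (Pi.single j 1) l * fderiv ℝ ε₁ y (Pi.single l 1) i
        - fderiv ℝ ε₂ y (Pi.single i 1) l * fderiv ℝ ε₁ y (Pi.single l 1) j
        = 2/(n:ℝ) * divg ε₁ y * ((if l = j then 1 else 0) * fderiv ℝ ε₂ y (Pi.single l 1) i
            + (if l = i then 1 else 0) * fderiv ℝ ε₂ y (Pi.single l 1) j)
          - 2/(n:ℝ) * divg ε₂ y * ((if l = j then 1 else 0) * fderiv ℝ ε₁ y (Pi.single l 1) i
            + (if l = i then 1 else 0) * fderiv ℝ ε₁ y (Pi.single l 1) j) := by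
      intro l
      have hA1 := hck₁ y l j
      have hA2 := hck₁ y l i
      have hB1 := hck₂ y l j
      have hB2 := hck₂ y l i
      linear_combination (fderiv ℝ ε₂ y (Pi.single l 1) i) * hA1
        + (fderiv ℝ ε₂ y (Pi.single l 1) j) * hA2
        - (fderiv ℝ ε₁ y (Pi.single l 1) i) * hB1
        - (fderiv ℝ ε₁ y (Pi.single l 1) j) * hB2
    rw [Finset.sum_congr rfl fun l _ => hterm l, Finset.sum_sub_distrib]
    simp only [mul_add, ite_mul, one_mul, zero_mul, mul_ite, mul_zero,
      Finset.sum_add_distrib, Finset.sum_ite_eq', Finset.mem_univ, if_true]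
    linear_combination (2/(n:ℝ) * divg ε₁ y) * hck₂ y i j
      - (2/(n:ℝ) * divg ε₂ y) * hck₁ y i j
  have keysum' : (∑ l, fderiv ℝ ε₁ y (Pi.single j 1) l * fderiv ℝ ε₂ y (Pi.single l 1) i)
      + (∑ l, fderiv ℝ ε₁ y (Pi.single i 1) l * fderiv ℝ ε₂ y (Pi.single l 1) j)
      - (∑ l, fderiv ℝ ε₂ y (Pi.single j 1) l * fderiv ℝ ε₁ y (Pi.single l 1) i)
      - (∑ l, fderiv ℝ ε₂ y (Pi.single i 1) l * fderiv ℝ ε₁ y (Pi.single l 1) j) = 0 := by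
    rw [← Finset.sum_add_distrib, ← Finset.sum_sub_distrib, ← Finset.sum_sub_distrib]
    exact keysum
  linear_combination h2ord₂ - h2ord₁ + keysum'

end aux

section bms
variable {n : ℕ} {ε : (Fin n → ℝ) → (Fin n → ℝ)} {T : (Fin n → ℝ) → ℝ}

lemma fderiv_bmsField (hT : ContDiff ℝ (⊤ : ℕ∞) T) (hε : ContDiff ℝ (⊤ : ℕ∞) ε)
    (u a : ℝ) (y w : Fin n → ℝ) :
    fderiv ℝ (bmsField n T ε) (u, y) (a, w)
      = (a / (n:ℝ) * divg ε y + u / (n:ℝ) * fderiv ℝ (divg ε) y w + fderiv ℝ T y w,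
         fderiv ℝ ε y w) := by
  have hfun : bmsField n T ε
      = fun p : ℝ × (Fin n → ℝ) => ((n:ℝ)⁻¹ * (p.1 * divg ε p.2) + T p.2, ε p.2) := by
    funext p
    simp only [bmsField]
    congr 1
    ring
  have hδ : HasFDerivAt (fun p : ℝ × (Fin n → ℝ) => divg ε p.2)
      ((fderiv ℝ (divg ε) y).comp (ContinuousLinearMap.snd ℝ ℝ (Fin n → ℝ))) (u, y) :=
    ((((contDiff_divg hε).differentiable (by simp)) y).hasFDerivAt).comp (u, y) (f := Prod.snd) hasFDerivAt_snd
  have hfst : HasFDerivAt (fun p : ℝ × (Fin n → ℝ) => p.1)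
      (ContinuousLinearMap.fst ℝ ℝ (Fin n → ℝ)) (u, y) := hasFDerivAt_fst
  have hmul := hfst.mul hδ
  have hc := hmul.const_mul ((n:ℝ)⁻¹)
  have hTc : HasFDerivAt (fun p : ℝ × (Fin n → ℝ) => T p.2)
      ((fderiv ℝ T y).comp (ContinuousLinearMap.snd ℝ ℝ (Fin n → ℝ))) (u, y) :=
    (((hT.differentiable (by simp)) y).hasFDerivAt).comp (u, y) hasFDerivAt_snd
  have hεc : HasFDerivAt (fun p : ℝ × (Fin n → ℝ) => ε p.2)
      ((fderiv ℝ ε y).comp (ContinuousLinearMap.snd ℝ ℝ (Fin n → ℝ))) (u, y) :=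
    (((hε.differentiable (by simp)) y).hasFDerivAt).comp (u, y) hasFDerivAt_snd
  have htot := HasFDerivAt.prodMk (hc.add hTc) hεc
  rw [hfun, HasFDerivAt.fderiv (f := fun p : ℝ × (Fin n → ℝ) =>
    ((n:ℝ)⁻¹ * (p.1 * divg ε p.2) + T p.2, ε p.2)) htot]
  simp only [ContinuousLinearMap.prod_apply, ContinuousLinearMap.add_apply,
    ContinuousLinearMap.coe_smul', Pi.smul_apply, ContinuousLinearMap.coe_comp',
    Function.comp_apply, ContinuousLinearMap.coe_snd', ContinuousLinearMap.coe_fst',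
    ContinuousLinearMap.smul_apply, smul_eq_mul]
  congr 1
  ring
end bms

/-- The BMS vector fields on `ℝ × ℝ^n` are closed under the Lie bracket of vector
fields; in particular they form a Lie subalgebra of the smooth vector fields. -/
theorem bms_bracket_closed {n : ℕ} (hn : 1 ≤ n)
    (X₁ X₂ : ℝ × (Fin n → ℝ) → ℝ × (Fin n → ℝ))
    (h₁ : IsBMS n X₁) (h₂ : IsBMS n X₂) : IsBMS n (vfBracket X₁ X₂) := by
  obtain ⟨T₁, ε₁, hT₁, hK₁, rfl⟩ := h₁
  obtain ⟨T₂, ε₂, hT₂, hK₂, rfl⟩ := h₂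
  have hε₁ := hK₁.1
  have hε₂ := hK₂.1
  refine ⟨fun y => (divg ε₂ y * T₁ y - divg ε₁ y * T₂ y) / (n:ℝ)
      + fderiv ℝ T₂ y (ε₁ y) - fderiv ℝ T₁ y (ε₂ y), vfBracket ε₁ ε₂, ?_, ck_bracket hK₁ hK₂, ?_⟩
  · exact (((((contDiff_divg hε₂).mul hT₁).sub ((contDiff_divg hε₁).mul hT₂)).div_const
      _).add ((hT₂.fderiv_right (by simp)).clm_apply hε₁)).sub
      ((hT₁.fderiv_right (by simp)).clm_apply hε₂)
  · funext p
    obtain ⟨u, y⟩ := p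
    have hb₁ : bmsField n T₁ ε₁ (u, y)
        = ((u / (n:ℝ) * divg ε₁ y + T₁ y, ε₁ y) : ℝ × (Fin n → ℝ)) := rfl
    have hb₂ : bmsField n T₂ ε₂ (u, y)
        = ((u / (n:ℝ) * divg ε₂ y + T₂ y, ε₂ y) : ℝ × (Fin n → ℝ)) := rfl
    have hL : vfBracket (bmsField n T₁ ε₁) (bmsField n T₂ ε₂) (u, y)
        = fderiv ℝ (bmsField n T₂ ε₂) (u, y) (u / (n:ℝ) * divg ε₁ y + T₁ y, ε₁ y)
          - fderiv ℝ (bmsField n T₁ ε₁) (u, y) (u / (n:ℝ) * divg ε₂ y + T₂ y, ε₂ y) := by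
      rw [vfBracket, ← hb₁, ← hb₂]
    rw [hL, fderiv_bmsField hT₂ hε₂, fderiv_bmsField hT₁ hε₁, Prod.mk_sub_mk]
    show _ = ((u / (n:ℝ) * divg (vfBracket ε₁ ε₂) y + _, vfBracket ε₁ ε₂ y) : ℝ × (Fin n → ℝ))
    have hv : vfBracket ε₁ ε₂ y = fderiv ℝ ε₂ y (ε₁ y) - fderiv ℝ ε₁ y (ε₂ y) := rfl
    rw [Prod.mk.injEq]
    refine ⟨?_, hv.symm⟩
    rw [divg_vfBracket hε₁ hε₂]
    ring
end

section
/- Let n ≥ 1. The supertranslations, i.e. the BMS vector fields of the form X_{T,0}(u,y) = (T(y), 0) with T : ℝ^n → ℝ smooth, form an abelian Lie ideal of the Lie algebra of BMS vector fields on ℝ × ℝ^n: (i) [X_{T₁,0}, X_{T₂,0}] = 0 for all smooth T₁, T₂; and (ii) for every BMS vector field X_{T',ε} and every smooth T, the bracket [X_{T',ε}, X_{T,0}] equals X_{S,0} with S = (DT)·ε − (1/n) T · div ε. -/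
/-- The supertranslation vector field `X_{T,0}(u,y) = (T(y), 0)` on `ℝ × ℝ^n`. -/
def superTrans (n : ℕ) (T : (Fin n → ℝ) → ℝ) :
    ℝ × (Fin n → ℝ) → ℝ × (Fin n → ℝ) :=
  fun p => (T p.2, 0)

section Aux

variable {n : ℕ}

lemma divg_contDiff {ε : (Fin n → ℝ) → (Fin n → ℝ)} (hε : ContDiff ℝ (⊤ : ℕ∞) ε) :
    ContDiff ℝ (⊤ : ℕ∞) (divg ε) := by
  have h : ContDiff ℝ (⊤ : ℕ∞) (fun y => fderiv ℝ ε y) := hε.fderiv_right (by simp)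
  exact ContDiff.sum fun k _ => contDiff_pi.mp (h.clm_apply contDiff_const) k

lemma superTrans_fderiv {T : (Fin n → ℝ) → ℝ} (hT : ContDiff ℝ (⊤ : ℕ∞) T)
    (p : ℝ × (Fin n → ℝ)) :
    fderiv ℝ (superTrans n T) p =
      ((fderiv ℝ T p.2).comp (ContinuousLinearMap.snd ℝ ℝ (Fin n → ℝ))).prod 0 := by
  exact (HasFDerivAt.prodMk ((hT.differentiable (by simp) p.2).hasFDerivAt.comp p hasFDerivAt_snd)
    (hasFDerivAt_const (0 : Fin n → ℝ) p)).fderiv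

end Aux

/-- The supertranslations form an abelian Lie ideal of the BMS algebra on `ℝ × ℝ^n`:
(i) `[X_{T₁,0}, X_{T₂,0}] = 0`, and (ii) for any BMS vector field `X_{T',ε}`,
`[X_{T',ε}, X_{T,0}] = X_{S,0}` with `S = (DT)·ε − (1/n) T div ε`. -/
theorem supertranslations_abelian_ideal {n : ℕ} (hn : 1 ≤ n) :
    (∀ T₁ T₂ : (Fin n → ℝ) → ℝ, ContDiff ℝ (⊤ : ℕ∞) T₁ → ContDiff ℝ (⊤ : ℕ∞) T₂ →
      vfBracket (superTrans n T₁) (superTrans n T₂) = 0) ∧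
    (∀ (T' T : (Fin n → ℝ) → ℝ) (ε : (Fin n → ℝ) → (Fin n → ℝ)),
      ContDiff ℝ (⊤ : ℕ∞) T' → ContDiff ℝ (⊤ : ℕ∞) T → IsConfKilling n ε →
      vfBracket (bmsField n T' ε) (superTrans n T)
        = superTrans n
            (fun y => fderiv ℝ T y (ε y) - 1 / (n : ℝ) * (T y * divg ε y))) := by
  constructor
  · intro T₁ T₂ hT₁ hT₂
    funext p
    simp [vfBracket, superTrans_fderiv hT₁, superTrans_fderiv hT₂, superTrans]
  · intro T' T ε hT' hT hK
    funext p
    have hg : ContDiff ℝ (⊤ : ℕ∞) (divg ε) := divg_contDiff hK.1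
    have hgp : HasFDerivAt (divg ε) (fderiv ℝ (divg ε) p.2) p.2 :=
      (hg.differentiable (by simp) p.2).hasFDerivAt
    have hεp : HasFDerivAt ε (fderiv ℝ ε p.2) p.2 :=
      (hK.1.differentiable (by simp) p.2).hasFDerivAt
    have hT'p : HasFDerivAt T' (fderiv ℝ T' p.2) p.2 :=
      (hT'.differentiable (by simp) p.2).hasFDerivAt
    have h1 : HasFDerivAt (fun q : ℝ × (Fin n → ℝ) => q.1 / (n:ℝ))
        (((n:ℝ)⁻¹) • ContinuousLinearMap.fst ℝ ℝ (Fin n → ℝ)) p := by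
      have := hasFDerivAt_fst (𝕜 := ℝ) (p := p) (F := Fin n → ℝ)
      simpa [div_eq_mul_inv] using this.mul_const ((n:ℝ)⁻¹)
    have h2 : HasFDerivAt (fun q : ℝ × (Fin n → ℝ) => divg ε q.2)
        ((fderiv ℝ (divg ε) p.2).comp (ContinuousLinearMap.snd ℝ ℝ (Fin n → ℝ))) p :=
      hgp.comp p hasFDerivAt_snd
    have h3 := (h1.mul h2).add (hT'p.comp p hasFDerivAt_snd)
    have h5 := HasFDerivAt.prodMk h3 (hεp.comp p hasFDerivAt_snd)
    have hfd : fderiv ℝ (bmsField n T' ε) p = _ := HasFDerivAt.fderiv h5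
    rw [vfBracket, superTrans_fderiv hT p, hfd]
    simp only [superTrans, bmsField, ContinuousLinearMap.prod_apply,
      ContinuousLinearMap.add_apply, ContinuousLinearMap.smul_apply,
      ContinuousLinearMap.coe_comp', Function.comp_apply,
      ContinuousLinearMap.coe_snd', ContinuousLinearMap.coe_fst',
      ContinuousLinearMap.zero_apply, map_zero, smul_eq_mul, Prod.mk_sub_mk]
    rw [Prod.mk.injEq]
    refine ⟨by ring, by simp⟩
end

section
/- Let n ≥ 1 and let X be a smooth vector field on ℝ × ℝ^n, written X(u,y) = (f(u,y), ε(u,y)) with f : ℝ^{1+n} → ℝ and ε : ℝ^{1+n} → ℝ^n smooth. Then X is a BMS vector field if and only if there exists a smooth function μ : ℝ^{1+n} → ℝ such that (i) [X, ∂_u] = −μ ∂_u, i.e. ∂_u f = μ and ∂_u ε = 0, and (ii) (D_y ε)(u,y) + (D_y ε)(u,y)ᵀ = 2 μ(u,y) · Id for all (u,y), where D_y denotes the derivative in the y-variables only. In that case μ is automatically independent of u, μ = (1/n) div_y ε, and f(u,y) = u μ(y) + f(0,y). (This characterizes BMS vector fields as the conformal symmetries of the flat Carrollian structure on ℝ ×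 ℝ^n given by the degenerate metric δ_{αβ} dy^α dy^β and the vector ∂_u.) -/
section helpers
variable {n : ℕ} {F : Type*} [NormedAddCommGroup F] [NormedSpace ℝ F]

lemma hasDerivAt_slice (g : ℝ × (Fin n → ℝ) → F) (u : ℝ) (y : Fin n → ℝ)
    (hg : DifferentiableAt ℝ g (u, y)) :
    HasDerivAt (fun t => g (t, y)) (fderiv ℝ g (u, y) (1, 0)) u :=
  hg.hasFDerivAt.comp_hasDerivAt u ((hasDerivAt_id u).prodMk (hasDerivAt_const u y))

lemma fderiv_comp_snd (ε₀ : (Fin n → ℝ) → F) (u : ℝ) (y : Fin n → ℝ)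
    (h : DifferentiableAt ℝ ε₀ y) :
    fderiv ℝ (fun p : ℝ × (Fin n → ℝ) => ε₀ p.2) (u, y)
      = (fderiv ℝ ε₀ y).comp (ContinuousLinearMap.snd ℝ ℝ (Fin n → ℝ)) :=
  (h.hasFDerivAt.comp (u, y) hasFDerivAt_snd).fderiv

lemma contDiff_divg' {n : ℕ} (ε₀ : (Fin n → ℝ) → (Fin n → ℝ)) (h : ContDiff ℝ (⊤ : ℕ∞) ε₀) :
    ContDiff ℝ (⊤ : ℕ∞) (fun y => ∑ k, fderiv ℝ ε₀ y (Pi.single k 1) k) := by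
  apply ContDiff.sum
  intro k _
  have h1 : ContDiff ℝ (⊤ : ℕ∞) (fderiv ℝ ε₀) := h.fderiv_right (by simp)
  exact (ContinuousLinearMap.proj (R := ℝ) (φ := fun _ : Fin n => ℝ) k).contDiff.comp
    (h1.clm_apply contDiff_const)

lemma aux {n : ℕ} (hn : 1 ≤ n)
    (f : ℝ × (Fin n → ℝ) → ℝ) (ε : ℝ × (Fin n → ℝ) → (Fin n → ℝ))
    (hf : ContDiff ℝ (⊤ : ℕ∞) f) (hε : ContDiff ℝ (⊤ : ℕ∞) ε)
    (μ : ℝ × (Fin n → ℝ) → ℝ)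
    (h1 : ∀ p, fderiv ℝ f p (1, 0) = μ p ∧ fderiv ℝ ε p (1, 0) = 0)
    (h2 : ∀ p i j, fderiv ℝ ε p (0, Pi.single j 1) i + fderiv ℝ ε p (0, Pi.single i 1) j
        = 2 * μ p * (if i = j then 1 else 0)) :
    (∀ u y, ε (u, y) = ε (0, y)) ∧
    (∀ u y v, fderiv ℝ ε (u, y) ((0 : ℝ), v) = fderiv ℝ (fun y => ε (0, y)) y v) ∧
    (∀ u y, μ (u, y) = μ (0, y)) ∧
    (∀ u y, μ (u, y) = 1 / (n : ℝ) * ∑ k, fderiv ℝ ε (u, y) (0, Pi.single k 1) k) ∧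
    (∀ u y, f (u, y) = u * μ (0, y) + f (0, y)) := by
  have hεd : Differentiable ℝ ε := hε.differentiable (by simp)
  have hfd : Differentiable ℝ f := hf.differentiable (by simp)
  have hconst : ∀ u y, ε (u, y) = ε (0, y) := by
    intro u y
    have hdiff : Differentiable ℝ (fun t => ε (t, y)) :=
      fun t => (hasDerivAt_slice ε t y (hεd _)).differentiableAt
    have hder : ∀ t, deriv (fun t => ε (t, y)) t = 0 := by
      intro t
      rw [(hasDerivAt_slice ε t y (hεd _)).deriv, (h1 (t, y)).2]
    exact is_const_of_deriv_eq_zero hdiff hder u 0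
  set ε₀ : (Fin n → ℝ) → (Fin n → ℝ) := fun y => ε (0, y) with hε₀def
  have hε₀d : Differentiable ℝ ε₀ :=
    (hε.comp ((contDiff_const (c := (0:ℝ))).prodMk contDiff_id)).differentiable (by simp)
  have hεeq : ε = fun p => ε₀ p.2 := by
    funext p
    exact hconst p.1 p.2
  have hkey : ∀ u y v, fderiv ℝ ε (u, y) ((0 : ℝ), v) = fderiv ℝ ε₀ y v := by
    intro u y v
    conv_lhs => rw [hεeq]
    rw [fderiv_comp_snd ε₀ u y (hε₀d y)]
    rfl
  have hdiag : ∀ u y k, fderiv ℝ ε (u, y) ((0:ℝ), Pi.single k 1) k = μ (u, y) := by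
    intro u y k
    have := h2 (u, y) k k
    simp at this
    linarith
  have hμc : ∀ u y, μ (u, y) = μ (0, y) := by
    intro u y
    have k0 : Fin n := ⟨0, hn⟩
    rw [← hdiag u y k0, ← hdiag 0 y k0, hkey u y, hkey 0 y]
  have hμdiv : ∀ u y, μ (u, y) = 1 / (n : ℝ) * ∑ k, fderiv ℝ ε (u, y) (0, Pi.single k 1) k := by
    intro u y
    have hsum : ∑ k : Fin n, fderiv ℝ ε (u, y) ((0:ℝ), Pi.single k 1) k
        = (n : ℝ) * μ (u, y) := by
      rw [Finset.sum_congr rfl fun k _ => hdiag u y k]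
      simp [mul_comm]
    have hn0 : (n : ℝ) ≠ 0 := Nat.cast_ne_zero.mpr (by omega)
    rw [hsum]
    field_simp
  have hfform : ∀ u y, f (u, y) = u * μ (0, y) + f (0, y) := by
    intro u y
    have hdiff : ∀ t, HasDerivAt (fun t => f (t, y) - t * μ (0, y)) 0 t := by
      intro t
      have h := (hasDerivAt_slice f t y (hfd _)).sub (hasDerivAt_mul_const (μ (0, y)))
      rwa [(h1 (t, y)).1, hμc t y, sub_self] at h
    have := is_const_of_deriv_eq_zero (fun t => (hdiff t).differentiableAt)
      (fun t => (hdiff t).deriv) u 0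
    simp at this
    linarith
  exact ⟨hconst, hkey, hμc, hμdiv, hfform⟩

end helpers

/-- A smooth vector field `X(u,y) = (f(u,y), ε(u,y))` on `ℝ × ℝ^n` is BMS iff there is a
smooth `μ` with `[X, ∂_u] = −μ ∂_u` (i.e. `∂_u f = μ`, `∂_u ε = 0`) and
`(D_y ε) + (D_y ε)ᵀ = 2μ·Id`; in that case `μ` is `u`-independent, `μ = (1/n) div_y ε`
and `f(u,y) = u μ(y) + f(0,y)`.  This characterizes BMS fields as the conformal
symmetries of the flat Carrollian structure on `ℝ × ℝ^n`. -/
theorem bms_iff_carroll_conformal {n : ℕ} (hn : 1 ≤ n)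
    (f : ℝ × (Fin n → ℝ) → ℝ) (ε : ℝ × (Fin n → ℝ) → (Fin n → ℝ))
    (hf : ContDiff ℝ (⊤ : ℕ∞) f) (hε : ContDiff ℝ (⊤ : ℕ∞) ε) :
    (IsBMS n (fun p => (f p, ε p)) ↔
      ∃ μ : ℝ × (Fin n → ℝ) → ℝ, ContDiff ℝ (⊤ : ℕ∞) μ ∧
        (∀ p, fderiv ℝ f p (1, 0) = μ p ∧ fderiv ℝ ε p (1, 0) = 0) ∧
        (∀ p i j, fderiv ℝ ε p (0, Pi.single j 1) i + fderiv ℝ ε p (0, Pi.single i 1) j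
          = 2 * μ p * (if i = j then 1 else 0))) ∧
    (∀ μ : ℝ × (Fin n → ℝ) → ℝ, ContDiff ℝ (⊤ : ℕ∞) μ →
      (∀ p, fderiv ℝ f p (1, 0) = μ p ∧ fderiv ℝ ε p (1, 0) = 0) →
      (∀ p i j, fderiv ℝ ε p (0, Pi.single j 1) i + fderiv ℝ ε p (0, Pi.single i 1) j
        = 2 * μ p * (if i = j then 1 else 0)) →
      ∀ u y, μ (u, y) = μ (0, y) ∧
        μ (u, y) = 1 / (n : ℝ) * ∑ k, fderiv ℝ ε (u, y) (0, Pi.single k 1) k ∧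
        f (u, y) = u * μ (0, y) + f (0, y)) := by
  have hn0 : (n : ℝ) ≠ 0 := Nat.cast_ne_zero.mpr (by omega)
  constructor
  · constructor
    · -- forward
      rintro ⟨T, ε₀, hT, ⟨hε₀, hck⟩, hX⟩
      have hfe : ∀ p : ℝ × (Fin n → ℝ),
          f p = p.1 / (n : ℝ) * divg ε₀ p.2 + T p.2 ∧ ε p = ε₀ p.2 := by
        intro p
        have := congrFun hX p
        simp only [bmsField, Prod.mk.injEq] at this
        exact this
      have hεfun : ε = fun p => ε₀ p.2 := funext fun p => (hfe p).2
      have hε₀d : Differentiable ℝ ε₀ := hε₀.differentiable (by simp)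
      refine ⟨fun p => 1 / (n : ℝ) * divg ε₀ p.2, ?_, ?_, ?_⟩
      · exact contDiff_const.mul ((contDiff_divg' ε₀ hε₀).comp contDiff_snd)
      · rintro ⟨u, y⟩
        constructor
        · -- ∂_u f = μ
          have H1 : HasDerivAt (fun t => f (t, y)) (fderiv ℝ f (u, y) (1, 0)) u :=
            hasDerivAt_slice f u y ((hf.differentiable (by simp)) _)
          have H2 : HasDerivAt (fun t => f (t, y)) (1 / (n : ℝ) * divg ε₀ y) u := by
            have heq : (fun t => f (t, y)) = fun t => t / (n : ℝ) * divg ε₀ y + T y := by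
              funext t
              exact (hfe (t, y)).1
            rw [heq]
            have := (((hasDerivAt_id u).div_const (n : ℝ)).mul_const (divg ε₀ y)).add_const (T y)
            simpa using this
          exact H1.unique H2
        · rw [hεfun, fderiv_comp_snd ε₀ u y (hε₀d y)]
          simp
      · rintro ⟨u, y⟩ i j
        have hsp : ∀ v, fderiv ℝ ε (u, y) ((0 : ℝ), v) = fderiv ℝ ε₀ y v := by
          intro v
          rw [hεfun, fderiv_comp_snd ε₀ u y (hε₀d y)]
          rfl
        rw [hsp, hsp]
        rw [hck y i j]
        ring
    · -- backward
      rintro ⟨μ, hμ, h1, h2⟩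
      obtain ⟨hconst, hkey, hμc, hμdiv, hfform⟩ := aux hn f ε hf hε μ h1 h2
      set ε₀ : (Fin n → ℝ) → (Fin n → ℝ) := fun y => ε (0, y) with hε₀def
      have hε₀s : ContDiff ℝ (⊤ : ℕ∞) ε₀ := hε.comp ((contDiff_const (c := (0:ℝ))).prodMk contDiff_id)
      have hdivg : ∀ y, divg ε₀ y = (n : ℝ) * μ (0, y) := by
        intro y
        have h := hμdiv 0 y
        have hsum : ∑ k : Fin n, fderiv ℝ ε ((0:ℝ), y) ((0:ℝ), Pi.single k 1) k
            = ∑ k : Fin n, fderiv ℝ ε₀ y (Pi.single k 1) k :=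
          Finset.sum_congr rfl fun k _ => congrFun (hkey 0 y (Pi.single k 1)) k
        rw [hsum] at h
        unfold divg
        rw [h]
        field_simp
      refine ⟨fun y => f (0, y), ε₀, ?_, ⟨hε₀s, ?_⟩, ?_⟩
      · exact hf.comp ((contDiff_const (c := (0:ℝ))).prodMk contDiff_id)
      · intro y i j
        have hl : ∀ v k, fderiv ℝ ε₀ y v k = fderiv ℝ ε ((0:ℝ), y) ((0:ℝ), v) k := by
          intro v k
          exact (congrFun (hkey 0 y v) k).symm
        rw [hl, hl, h2 ((0:ℝ), y) i j, hdivg y]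
        field_simp
      · funext p
        obtain ⟨u, y⟩ := p
        simp only [bmsField, Prod.mk.injEq]
        constructor
        · rw [hfform u y, hdivg y]
          field_simp
        · exact hconst u y
  · intro μ hμ h1 h2 u y
    obtain ⟨hconst, hkey, hμc, hμdiv, hfform⟩ := aux hn f ε hf hε μ h1 h2
    exact ⟨hμc u y, hμdiv u y, hfform u y⟩
end

section
/- Let d ≥ 4 and n = d − 2. Suppose λ̄ : ℝ × ℝ^n → ℝ, ε^u : ℝ × ℝ^n → ℝ and ε : ℝ × ℝ^n → ℝ^n are smooth and satisfy the residual-symmetry conditions obtained from preservation of the boundary conditions with the flat frame: ∂_u λ̄ = 0, ∂_u ε^u = λ̄, ∂_u ε = 0, and the conformal Killing condition ∂_α ε_β + ∂_β ε_α = 2 λ̄ δ_{αβ} for all spatial indices α, β. Then λ̄ = (1/n) div_y ε, ε^u(u,y) = u λ̄(y) + T(y) where T(y) := ε^u(0,y), and the vector field ε^u ∂_u + ε^α ∂_α on ℝ × ℝ^n is a BMS vector field. Hence every residual symmetry preserving the boundary conditions is a BMS transformation. -/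
private lemma aux_const {E F : Type*} [NormedAddCommGroup E] [NormedSpace ℝ E]
    [NormedAddCommGroup F] [NormedSpace ℝ F]
    (f : ℝ × E → F) (hf : Differentiable ℝ f)
    (h : ∀ p, fderiv ℝ f p (1, 0) = 0) (u : ℝ) (y : E) : f (u, y) = f (0, y) := by
  have key : ∀ t : ℝ, HasDerivAt (fun t => f (t, y)) 0 t := by
    intro t
    have h1 : HasDerivAt (fun t : ℝ => (t, y)) ((1 : ℝ), (0 : E)) t :=
      (hasDerivAt_id t).prodMk (hasDerivAt_const t y)
    have h2 := (hf (t, y)).hasFDerivAt.comp_hasDerivAt t h1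
    simpa [h (t, y), Function.comp_def] using h2
  exact is_const_of_deriv_eq_zero (fun t => (key t).differentiableAt)
    (fun t => (key t).deriv) u 0

private lemma aux_slice {E F : Type*} [NormedAddCommGroup E] [NormedSpace ℝ E]
    [NormedAddCommGroup F] [NormedSpace ℝ F]
    (f : ℝ × E → F) (hf : Differentiable ℝ f) (y v : E) :
    fderiv ℝ (fun y => f (0, y)) y v = fderiv ℝ f (0, y) (0, v) := by
  have h1 : HasFDerivAt (fun y : E => ((0 : ℝ), y))
      (((0 : E →L[ℝ] ℝ)).prod (ContinuousLinearMap.id ℝ E)) y :=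
    (hasFDerivAt_const (0 : ℝ) y).prodMk (hasFDerivAt_id y)
  have h2 : HasFDerivAt (fun y => f (0, y))
      ((fderiv ℝ f (0, y)).comp (((0 : E →L[ℝ] ℝ)).prod (ContinuousLinearMap.id ℝ E))) y :=
    ((hf (0, y)).hasFDerivAt).comp y h1
  rw [h2.fderiv]
  rfl

/-- Residual symmetries preserving the flat-frame boundary conditions are BMS
transformations: if `λ̄, ε^u, ε` on `ℝ × ℝ^n` (`n = d − 2`, `d ≥ 4`) satisfy
`∂_u λ̄ = 0`, `∂_u ε^u = λ̄`, `∂_u ε = 0` and the conformal Killing condition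
`∂_α ε_β + ∂_β ε_α = 2 λ̄ δ_{αβ}`, then `λ̄ = (1/n) div_y ε`,
`ε^u(u,y) = u λ̄(y) + T(y)` with `T(y) = ε^u(0,y)`, and `ε^u ∂_u + ε^α ∂_α` is a BMS
vector field. -/
theorem residual_symmetry_is_BMS {d : ℕ} (hd : 4 ≤ d) {n : ℕ} (hn : n = d - 2)
    (lam epsu : ℝ × (Fin n → ℝ) → ℝ) (ε : ℝ × (Fin n → ℝ) → (Fin n → ℝ))
    (hlam : ContDiff ℝ (⊤ : ℕ∞) lam) (hepsu : ContDiff ℝ (⊤ : ℕ∞) epsu) (hε : ContDiff ℝ (⊤ : ℕ∞) ε)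
    (hu_lam : ∀ p, fderiv ℝ lam p (1, 0) = 0)
    (hu_epsu : ∀ p, fderiv ℝ epsu p (1, 0) = lam p)
    (hu_ε : ∀ p, fderiv ℝ ε p (1, 0) = 0)
    (hck : ∀ p α β, fderiv ℝ ε p (0, Pi.single α 1) β + fderiv ℝ ε p (0, Pi.single β 1) α
      = 2 * lam p * (if α = β then 1 else 0)) :
    (∀ p, lam p = 1 / (n : ℝ) * ∑ k, fderiv ℝ ε p (0, Pi.single k 1) k) ∧
    (∀ u y, epsu (u, y) = u * lam (0, y) + epsu (0, y)) ∧
    IsBMS n (fun p => (epsu p, ε p)) := by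
  have hn2 : 2 ≤ n := by omega
  have hnR : (n : ℝ) ≠ 0 := Nat.cast_ne_zero.mpr (by omega)
  -- diagonal entries of the CK equation
  have hdiag : ∀ p k, fderiv ℝ ε p (0, Pi.single k 1) k = lam p := by
    intro p k
    have h := hck p k k
    simp at h
    linarith
  have hsum : ∀ p, ∑ k, fderiv ℝ ε p (0, Pi.single k 1) k = (n : ℝ) * lam p := by
    intro p
    rw [Finset.sum_congr rfl (fun k _ => hdiag p k)]
    simp [mul_comm]
  have hlamformula : ∀ p, lam p = 1 / (n : ℝ) * ∑ k, fderiv ℝ ε p (0, Pi.single k 1) k := by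
    intro p
    rw [hsum p]
    field_simp
  -- constancy in u
  have hlamconst : ∀ u y, lam (u, y) = lam (0, y) :=
    aux_const lam (hlam.differentiable (by simp)) hu_lam
  have hεconst : ∀ u y, ε (u, y) = ε (0, y) :=
    aux_const ε (hε.differentiable (by simp)) hu_ε
  -- the epsu formula
  have hepsuformula : ∀ u y, epsu (u, y) = u * lam (0, y) + epsu (0, y) := by
    intro u y
    have key : ∀ t : ℝ, HasDerivAt (fun t => epsu (t, y) - t * lam (0, y)) 0 t := by
      intro t
      have h1 : HasDerivAt (fun t : ℝ => (t, y)) ((1 : ℝ), (0 : Fin n → ℝ)) t :=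
        (hasDerivAt_id t).prodMk (hasDerivAt_const t y)
      have h2 := ((hepsu.differentiable (by simp)) (t, y)).hasFDerivAt.comp_hasDerivAt t h1
      have ha : HasDerivAt (fun t => epsu (t, y)) (lam (t, y)) t := by
        simpa [hu_epsu (t, y), Function.comp_def] using h2
      have hb : HasDerivAt (fun t : ℝ => t * lam (0, y)) (lam (0, y)) t := by
        simpa using (hasDerivAt_id t).mul_const (lam (0, y))
      have := ha.sub hb
      simpa [hlamconst t y, Pi.sub_def] using this
    have hc := is_const_of_deriv_eq_zero (f := fun t => epsu (t, y) - t * lam (0, y))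
      (fun t => (key t).differentiableAt) (fun t => (key t).deriv) u 0
    simp only [zero_mul, sub_zero] at hc
    linarith
  refine ⟨hlamformula, hepsuformula, ?_⟩
  -- BMS structure
  set T : (Fin n → ℝ) → ℝ := fun y => epsu (0, y) with hT
  set ε₀ : (Fin n → ℝ) → (Fin n → ℝ) := fun y => ε (0, y) with hε₀
  have hslice : ∀ (y v : Fin n → ℝ), fderiv ℝ ε₀ y v = fderiv ℝ ε (0, y) (0, v) :=
    fun y v => aux_slice ε (hε.differentiable (by simp)) y v
  have hdiv : ∀ y, divg ε₀ y = (n : ℝ) * lam (0, y) := by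
    intro y
    unfold divg
    rw [Finset.sum_congr rfl (fun k _ => by rw [hslice y (Pi.single k 1)])]
    exact hsum (0, y)
  have hTsmooth : ContDiff ℝ (⊤ : ℕ∞) T := hepsu.comp (contDiff_const.prodMk contDiff_id)
  have hε₀smooth : ContDiff ℝ (⊤ : ℕ∞) ε₀ := hε.comp (contDiff_const.prodMk contDiff_id)
  refine ⟨T, ε₀, hTsmooth, ⟨hε₀smooth, ?_⟩, ?_⟩
  · intro y i j
    rw [hslice y (Pi.single j 1), hslice y (Pi.single i 1), hdiv y]
    have h1 := hck (0, y) i j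
    have h2 : 2 / (n : ℝ) * ((n : ℝ) * lam (0, y)) = 2 * lam (0, y) := by
      field_simp
    rw [h2]
    linarith [h1, mul_comm (fderiv ℝ ε (0, y) (0, Pi.single i 1) j)
      (fderiv ℝ ε (0, y) (0, Pi.single j 1) i)]
  · funext p
    have hp : p = (p.1, p.2) := rfl
    unfold bmsField
    refine Prod.ext ?_ ?_
    · show epsu p = p.1 / (n : ℝ) * divg ε₀ p.2 + T p.2
      rw [hdiv p.2, hT]
      have : p.1 / (n : ℝ) * ((n : ℝ) * lam (0, p.2)) = p.1 * lam (0, p.2) := by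
        field_simp
      rw [this]
      calc epsu p = epsu (p.1, p.2) := by rw [← hp]
        _ = p.1 * lam (0, p.2) + epsu (0, p.2) := hepsuformula p.1 p.2
    · show ε p = ε₀ p.2
      calc ε p = ε (p.1, p.2) := by rw [← hp]
        _ = ε (0, p.2) := hεconst p.1 p.2
end

section
/- Fix n ≥ 1 and a type ι. In the setting of the jet complex (C^•, δ): an element V ∈ C^0, i.e. a family V : ι × (Fin n →₀ ℕ) → R, satisfies δV = 0 if and only if V(i, m + δ_a) = D_a(V(i, m)) for all i ∈ ι, all multi-indices m and all a ∈ Fin n. Moreover, the map sending V to its 'characteristic' (V(i, 0))_{i ∈ ι} is a bijection from {V ∈ C^0 : δV = 0} onto the set of all families ι → R; in other words, the θ-degree-zero cocycles are exactly the evolutionary vector fields, each uniquely determined by its characteristic via V(i, m) = D^m(V(i, 0)), where D^m denotes the composite of the (pairwise commuting) total derivatives D_a according to the multi-index m. -/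
/-- The jet variables `φ(i, m)`: `i` a dependent variable, `m` a multi-index. -/
abbrev JetVar (n : ℕ) (ι : Type) : Type := ι × (Fin n →₀ ℕ)

/-- The polynomial algebra `R` in the jet variables. -/
abbrev JetR (n : ℕ) (ι : Type) : Type := MvPolynomial (JetVar n ι) ℝ

/-- The total derivative `D_a`: the unique `ℝ`-algebra derivation of `R` with
`D_a φ(i, m) = φ(i, m + δ_a)`. -/
noncomputable def Djet (n : ℕ) (ι : Type) (a : Fin n) :
    Derivation ℝ (JetR n ι) (JetR n ι) :=
  MvPolynomial.mkDerivation ℝ fun p => MvPolynomial.X (p.1, p.2 + Finsupp.single a 1)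

/-- The θ-degree-zero vertical vector fields `C⁰`: families `ι × multiindex → R`. -/
abbrev C0 (n : ℕ) (ι : Type) : Type := JetVar n ι → JetR n ι

/-- The θ-degree-one vertical vector fields `C¹`: families of `R`-valued linear forms
on `ℝ^n`. -/
abbrev C1 (n : ℕ) (ι : Type) : Type := JetVar n ι → ((Fin n → ℝ) →ₗ[ℝ] JetR n ι)

/-- The differential `δ : C⁰ → C¹`,
`(δV)(i, m) = Σ_a e^a · (D_a(V(i, m)) − V(i, m + δ_a))`. -/
noncomputable def delta0 (n : ℕ) (ι : Type) (V : C0 n ι) : C1 n ι :=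
  fun key => ∑ a : Fin n,
    LinearMap.smulRight (LinearMap.proj a)
      (Djet n ι a (V key) - V (key.1, key.2 + Finsupp.single a 1))

/-- The composite total derivative `D^m` according to a multi-index `m`. -/
noncomputable def Dpow (n : ℕ) (ι : Type) (m : Fin n →₀ ℕ) :
    Module.End ℝ (JetR n ι) :=
  (((List.finRange n).map fun a => ((Djet n ι a).toLinearMap) ^ (m a))).prod

lemma Djet_X (n : ℕ) (ι : Type) (a : Fin n) (i : ι) (m : Fin n →₀ ℕ) :
    Djet n ι a (MvPolynomial.X (i, m)) = MvPolynomial.X (i, m + Finsupp.single a 1) :=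
  MvPolynomial.mkDerivation_X ℝ _ (i, m)

lemma Djet_comm (n : ℕ) (ι : Type) (a b : Fin n) (x : JetR n ι) :
    Djet n ι a (Djet n ι b x) = Djet n ι b (Djet n ι a x) := by
  have h : ⁅Djet n ι a, Djet n ι b⁆ = 0 := by
    apply MvPolynomial.derivation_ext
    intro p
    rw [Derivation.commutator_apply]
    rcases p with ⟨i, m⟩
    rw [Djet_X, Djet_X, Djet_X, Djet_X, add_assoc, add_assoc,
      add_comm (Finsupp.single b 1) (Finsupp.single a 1), sub_self, Derivation.zero_apply]
  have h2 := congrArg (fun D => D x) h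
  simp only [Derivation.commutator_apply, Derivation.zero_apply] at h2
  exact sub_eq_zero.mp h2

lemma Djet_commute (n : ℕ) (ι : Type) (a b : Fin n) :
    Commute ((Djet n ι a).toLinearMap) ((Djet n ι b).toLinearMap) :=
  LinearMap.ext fun x => Djet_comm n ι a b x

lemma list_aux (n : ℕ) (ι : Type) (a : Fin n) (m : Fin n →₀ ℕ) :
    ∀ l : List (Fin n), l.Nodup →
      (l.map fun b => ((Djet n ι b).toLinearMap) ^ ((m + Finsupp.single a 1 : Fin n →₀ ℕ) b)).prod =
        (if a ∈ l then
          ((Djet n ι a).toLinearMap) *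
            (l.map fun b => ((Djet n ι b).toLinearMap) ^ (m b)).prod
        else (l.map fun b => ((Djet n ι b).toLinearMap) ^ (m b)).prod) := by
  intro l
  induction l with
  | nil => simp
  | cons c l ih =>
    intro hnd
    rw [List.nodup_cons] at hnd
    obtain ⟨hc, hnd⟩ := hnd
    by_cases hca : c = a
    · subst hca
      have h1 : (m + Finsupp.single c 1 : Fin n →₀ ℕ) c = m c + 1 := by
        simp [Finsupp.add_apply]
      have h2 : (l.map fun b => ((Djet n ι b).toLinearMap) ^ ((m + Finsupp.single c 1 : Fin n →₀ ℕ) b)).prod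
          = (l.map fun b => ((Djet n ι b).toLinearMap) ^ (m b)).prod := by
        congr 1
        apply List.map_congr_left
        intro b hb
        have hb' : b ≠ c := fun h => hc (h ▸ hb)
        rw [Finsupp.add_apply, Finsupp.single_apply, if_neg (Ne.symm hb'), add_zero]
      simp only [List.map_cons, List.prod_cons, h1, h2, pow_succ']
      rw [if_pos (List.mem_cons_self : c ∈ c :: l), mul_assoc]
    · have h1 : (m + Finsupp.single a 1 : Fin n →₀ ℕ) c = m c := by
        rw [Finsupp.add_apply, Finsupp.single_apply, if_neg (Ne.symm hca), add_zero]
      simp only [List.map_cons, List.prod_cons, h1, ih hnd]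
      by_cases hal : a ∈ l
      · rw [if_pos hal, if_pos (List.mem_cons_of_mem c hal), ← mul_assoc, ← mul_assoc,
          ((Djet_commute n ι c a).pow_left (m c)).eq]
      · rw [if_neg hal, if_neg (by simp [hal, Ne.symm hca])]

lemma Dpow_zero (n : ℕ) (ι : Type) : Dpow n ι 0 = 1 := by
  unfold Dpow
  rw [List.prod_eq_one]
  intro x hx
  simp only [List.mem_map] at hx
  obtain ⟨b, _, rfl⟩ := hx
  simp

lemma Dpow_add_single (n : ℕ) (ι : Type) (m : Fin n →₀ ℕ) (a : Fin n) :
    Dpow n ι (m + Finsupp.single a 1) = (Djet n ι a).toLinearMap * Dpow n ι m := by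
  unfold Dpow
  rw [list_aux n ι a m (List.finRange n) (List.nodup_finRange n),
    if_pos (List.mem_finRange a)]

lemma delta0_eq_zero_iff (n : ℕ) (ι : Type) (V : C0 n ι) :
    delta0 n ι V = 0 ↔
      ∀ (i : ι) (m : Fin n →₀ ℕ) (a : Fin n),
        V (i, m + Finsupp.single a 1) = Djet n ι a (V (i, m)) := by
  constructor
  · intro h i m a
    have h2 := congrArg (fun L => L (Pi.single a (1 : ℝ))) (congrFun h (i, m))
    simp only [delta0, LinearMap.sum_apply, LinearMap.smulRight_apply, LinearMap.proj_apply,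
      Pi.single_apply, ite_smul, one_smul, zero_smul, Finset.sum_ite_eq', Finset.mem_univ,
      if_true, Pi.zero_apply, LinearMap.zero_apply] at h2
    exact (sub_eq_zero.mp h2).symm
  · intro h
    funext key
    have hz : ∀ a : Fin n,
        Djet n ι a (V key) - V (key.1, key.2 + Finsupp.single a 1) = 0 := fun a => by
      rw [h key.1 key.2 a, sub_self]
    simp [delta0, hz]

lemma V_eq_Dpow (n : ℕ) (ι : Type) (V : C0 n ι) (hV : delta0 n ι V = 0)
    (i : ι) (m : Fin n →₀ ℕ) : V (i, m) = Dpow n ι m (V (i, 0)) := by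
  have hco := (delta0_eq_zero_iff n ι V).mp hV
  suffices h : ∀ (N : ℕ) (m : Fin n →₀ ℕ), (∑ b, m b) = N → V (i, m) = Dpow n ι m (V (i, 0)) from
    h _ m rfl
  intro N
  induction N using Nat.strong_induction_on with
  | _ N ih =>
    intro m hm
    by_cases h0 : m = 0
    · subst h0
      rw [Dpow_zero]
      rfl
    · obtain ⟨a, ha⟩ : ∃ a, m a ≠ 0 := by
        by_contra hc
        push_neg at hc
        exact h0 (Finsupp.ext fun a => hc a)
      set m' := m - Finsupp.single a 1 with hm'
      have hle : Finsupp.single a 1 ≤ m := by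
        rw [Finsupp.single_le_iff]
        omega
      have hmm : m' + Finsupp.single a 1 = m := tsub_add_cancel_of_le hle
      have hs : (∑ b, m' b) + 1 = N := by
        have h3 : ∑ b, ((m' + Finsupp.single a 1 : Fin n →₀ ℕ) b) = N := by rw [hmm]; exact hm
        simpa [Finsupp.add_apply, Finset.sum_add_distrib, Finsupp.single_apply,
          Finset.sum_ite_eq'] using h3
      have hlt : (∑ b, m' b) < N := by omega
      calc V (i, m) = V (i, m' + Finsupp.single a 1) := by rw [hmm]
        _ = Djet n ι a (V (i, m')) := hco i m' a
        _ = Djet n ι a (Dpow n ι m' (V (i, 0))) := by rw [ih _ hlt m' rfl]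
        _ = Dpow n ι m (V (i, 0)) := by rw [← hmm, Dpow_add_single]; rfl

/-- θ-degree-zero cocycles of the jet complex are the evolutionary vector fields:
`δV = 0` iff `V(i, m + δ_a) = D_a(V(i, m))` for all `i, m, a`; the map
`V ↦ (V(i,0))_i` is a bijection from the cocycles onto all families `ι → R`, i.e.
each cocycle is uniquely determined by its characteristic via `V(i,m) = D^m(V(i,0))`
(the total derivatives pairwise commute). -/
theorem jet_degree_zero_cocycles_are_evolutionary (n : ℕ) (hn : 1 ≤ n) (ι : Type) :
    (∀ (a : Fin n) (i : ι) (m : Fin n →₀ ℕ),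
      Djet n ι a (MvPolynomial.X (i, m)) = MvPolynomial.X (i, m + Finsupp.single a 1)) ∧
    (∀ a b : Fin n, ∀ x : JetR n ι, Djet n ι a (Djet n ι b x) = Djet n ι b (Djet n ι a x)) ∧
    (∀ V : C0 n ι, delta0 n ι V = 0 ↔
      ∀ (i : ι) (m : Fin n →₀ ℕ) (a : Fin n),
        V (i, m + Finsupp.single a 1) = Djet n ι a (V (i, m))) ∧
    Set.BijOn (fun (V : C0 n ι) => fun i : ι => V (i, 0))
      {V : C0 n ι | delta0 n ι V = 0} Set.univ ∧
    (∀ V : C0 n ι, delta0 n ι V = 0 →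
      ∀ (i : ι) (m : Fin n →₀ ℕ), V (i, m) = Dpow n ι m (V (i, 0))) := by
  refine ⟨fun a i m => Djet_X n ι a i m, Djet_comm n ι, delta0_eq_zero_iff n ι, ⟨?_, ?_, ?_⟩,
    V_eq_Dpow n ι⟩
  · intro V _
    trivial
  · intro V hV W hW hchar
    funext p
    rcases p with ⟨i, m⟩
    rw [V_eq_Dpow n ι V hV i m, V_eq_Dpow n ι W hW i m]
    exact congrArg _ (congrFun hchar i)
  · intro W _
    refine ⟨fun p => Dpow n ι p.2 (W p.1), ?_, ?_⟩
    · show delta0 n ι _ = 0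
      rw [delta0_eq_zero_iff]
      intro i m a
      show Dpow n ι (m + Finsupp.single a 1) (W i) = Djet n ι a (Dpow n ι m (W i))
      rw [Dpow_add_single]
      rfl
    · funext i
      show Dpow n ι 0 (W i) = W i
      rw [Dpow_zero]
      rfl
end
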